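/- If a family (j_m)_{m ∈ ℤ} of complex numbers and γ ∈ ℤ satisfy −2n·j_{m+n} = (m−n−γ)·j_n for all m, n ∈ ℤ, then j_m = 0 for all m ∈ ℤ. -/

import Mathlib

/-!
Taking `n = 0` kills `j 0`, and then `m = -n` gives `(2n + γ) j n = 0`, so `j n = 0` except at
the single index with `2n + γ = 0`. There `n ≠ 0`, the index `2n` is not exceptional, and
`m = n` gives `2n j n = -2n j (2n) = 0`.
-/

theorem coeff_zero_eq_zero_of_rel {R : Type*} [Ring R] {j : ℤ → R} {γ : ℤ}
    (h : ∀ m n : ℤ, -2 * (n : R) * j (m + n) = ((m - n - γ : ℤ) : R) * j n) : j 0 = 0 := by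
  simpa using (h (γ + 1) 0).symm

section

variable {R : Type*} [Ring R] [IsDomain R] [CharZero R] {j : ℤ → R} {γ : ℤ}

theorem coeff_eq_zero_of_two_mul_add_ne_zero
    (h : ∀ m n : ℤ, -2 * (n : R) * j (m + n) = ((m - n - γ : ℤ) : R) * j n)
    {n : ℤ} (hn : 2 * n + γ ≠ 0) : j n = 0 := by
  have hneg := h (-n) n
  rw [neg_add_cancel, coeff_zero_eq_zero_of_rel h, mul_zero, eq_comm, mul_eq_zero] at hneg
  refine hneg.resolve_left ?_
  exact_mod_cast (show -n - n - γ ≠ 0 by omega)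

theorem coeff_eq_zero_of_rel
    (h : ∀ m n : ℤ, -2 * (n : R) * j (m + n) = ((m - n - γ : ℤ) : R) * j n) (n : ℤ) :
    j n = 0 := by
  by_cases hn : 2 * n + γ = 0
  · rcases eq_or_ne n 0 with rfl | hn0
    · exact coeff_zero_eq_zero_of_rel h
    have hdouble : j (n + n) = 0 := coeff_eq_zero_of_two_mul_add_ne_zero h (by omega)
    have hdiag := h n n
    rw [hdouble, mul_zero, eq_comm, mul_eq_zero] at hdiag
    refine hdiag.resolve_left ?_
    exact_mod_cast (show n - n - γ ≠ 0 by omega)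
  · exact coeff_eq_zero_of_two_mul_add_ne_zero h hn

end

theorem half_derivation_coeff_j
    (j : ℤ → ℂ) (γ : ℤ)
    (h : ∀ m n : ℤ, -2 * (n : ℂ) * j (m + n)
        = ((m - n - γ : ℤ) : ℂ) * j n) :
    ∀ m : ℤ, j m = 0 :=
  coeff_eq_zero_of_rel h
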